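/- The three q-series identities hold in ℚ[[q]]: Z(2) = [2], Z(3) = 2[3], and Z(4) = [4] − (1/6)[2], where Z(s) = ∑_{n ≥ 1} Q_s^O(qⁿ)/(1−qⁿ)^s with Q_s^O(t) = t^{s/2} for s even and t^{(s−1)/2}(t+1) for s odd, and [s] = (1/(s−1)!)∑_{n,d≥1} d^{s−1} q^{nd}. -/

import Mathlib

open PowerSeries

/-- Pairs (n,d) with n,d ≥ 1 and n·d = N. -/
def qPairs (N : ℕ) : Finset (ℕ × ℕ) :=
  (Finset.range (N + 1) ×ˢ Finset.range (N + 1)).filter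
    (fun p => 1 ≤ p.1 ∧ 1 ≤ p.2 ∧ p.1 * p.2 = N)

/-- The depth-one bracket [s] = (1/(s-1)!) ∑_{n,d≥1} d^{s-1} q^{nd} ∈ ℚ[[q]]. -/
noncomputable def bracket (s : ℕ) : PowerSeries ℚ :=
  PowerSeries.mk fun N => ((s - 1).factorial : ℚ)⁻¹ * ∑ p ∈ qPairs N, (p.2 : ℚ) ^ (s - 1)

/-- Z_Q(s) = ∑_{n≥1} Q(qⁿ)/(1-qⁿ)^s ∈ ℚ[[q]] for a numerator polynomial Q with Q(0)=0. -/
noncomputable def ZO (Q : Polynomial ℚ) (s : ℕ) : PowerSeries ℚ :=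
  PowerSeries.mk fun N => ∑ n ∈ Finset.Icc 1 N, PowerSeries.coeff N
    (Polynomial.eval₂ (PowerSeries.C (R := ℚ)) (PowerSeries.X ^ n) Q *
      ((1 - PowerSeries.X ^ n) ^ s)⁻¹)

/-
Each numerator is chosen so that `Q(t)/(1-t)^s = ∑ c(m) tᵐ` has polynomial coefficients:
`c(m) = m`, `m²` and `binom(m+1, 3) = (m³-m)/6` for `s = 2, 3, 4` (read off from
`(1-t)^{-(d+1)} = ∑ binom(d+m, d) tᵐ`). Substituting `t = qⁿ` is the ring map `expand n`, so
`Z_Q(s) = ∑ₙ ∑ₘ c(m) q^{nm}` has `q^N`-coefficient `∑_{nd=N} c(d)`, which is the `q^N`-coefficient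
of the corresponding combination of brackets `[s] = ∑_{nd=N} d^{s-1}/(s-1)!`.
-/

namespace PowerSeries

variable {k : Type*} [Field k]

theorem expand_inv (n : ℕ) (hn : n ≠ 0) {φ : k⟦X⟧} (hφ : constantCoeff φ ≠ 0) :
    expand n hn φ⁻¹ = (expand n hn φ)⁻¹ := by
  rw [eq_comm, inv_eq_iff_mul_eq_one (by simpa using hφ), ← map_mul,
    PowerSeries.inv_mul_cancel _ hφ, map_one]

theorem expand_coe (n : ℕ) (hn : n ≠ 0) (Q : Polynomial k) :
    expand n hn (Q : k⟦X⟧) = Q.eval₂ C (X ^ n) := by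
  rw [← Polynomial.eval₂_C_X_eq_coe, ← AlgHom.coe_toRingHom, Polynomial.hom_eval₂]
  congr 1
  · ext r : 1
    exact expand_C n hn r
  · exact expand_X n hn

theorem inv_one_sub_pow_succ (d : ℕ) :
    ((1 - X : k⟦X⟧) ^ (d + 1))⁻¹ = mk fun m => (Nat.choose (d + m) d : k) :=
  (inv_eq_iff_mul_eq_one (by simp)).2 (mk_add_choose_mul_one_sub_pow_eq_one k d)

theorem coeff_X_pow_mul_inv_one_sub_pow_succ (j d m : ℕ) :
    coeff m ((X : k⟦X⟧) ^ j * ((1 - X) ^ (d + 1))⁻¹) =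
      if j ≤ m then (Nat.choose (d + (m - j)) d : k) else 0 := by
  rw [inv_one_sub_pow_succ, coeff_X_pow_mul', coeff_mk]

end PowerSeries

open PowerSeries

theorem qPairs_eq_divisorsAntidiagonal (N : ℕ) : qPairs N = N.divisorsAntidiagonal := by
  ext ⟨a, b⟩
  simp only [qPairs, Finset.mem_filter, Finset.mem_product, Finset.mem_range,
    Nat.mem_divisorsAntidiagonal]
  constructor
  · rintro ⟨-, ha, hb, rfl⟩
    exact ⟨rfl, by positivity⟩
  · rintro ⟨rfl, hN⟩
    have ha := Nat.le_of_dvd (Nat.pos_of_ne_zero hN) (dvd_mul_right a b)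
    have hb := Nat.le_of_dvd (Nat.pos_of_ne_zero hN) (dvd_mul_left b a)
    have := Nat.pos_of_ne_zero (left_ne_zero_of_mul hN)
    have := Nat.pos_of_ne_zero (right_ne_zero_of_mul hN)
    exact ⟨⟨by omega, by omega⟩, by omega, by omega, rfl⟩

theorem filter_dvd_Icc_eq_divisors (N : ℕ) : {n ∈ Finset.Icc 1 N | n ∣ N} = N.divisors :=
  rfl

theorem ZO_eq_mk_sum_qPairs {Q : Polynomial ℚ} {s : ℕ} {c : ℕ → ℚ}
    (hc : (Q : ℚ⟦X⟧) * ((1 - X) ^ s)⁻¹ = mk c) :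
    ZO Q s = mk fun N => ∑ p ∈ qPairs N, c p.2 := by
  have hexpand (n : ℕ) (hn : n ≠ 0) :
      Q.eval₂ C (X ^ n) * ((1 - X ^ n) ^ s)⁻¹ = expand n hn (mk c) := by
    rw [← hc, map_mul, expand_inv n hn (by simp), expand_coe]
    simp
  ext N
  rw [ZO, coeff_mk, coeff_mk, qPairs_eq_divisorsAntidiagonal,
    Nat.sum_divisorsAntidiagonal (fun _ d => c d), ← filter_dvd_Icc_eq_divisors, Finset.sum_filter]
  refine Finset.sum_congr rfl fun n hn => ?_
  rw [hexpand n (by simp at hn; omega), coeff_expand, coeff_mk]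

theorem X_mul_inv_one_sub_sq :
    ((Polynomial.X : Polynomial ℚ) : ℚ⟦X⟧) * ((1 - X) ^ 2)⁻¹ = mk fun m => (m : ℚ) := by
  ext m
  rw [Polynomial.coe_X]
  nth_rw 1 [← pow_one (X : ℚ⟦X⟧)]
  rw [coeff_X_pow_mul_inv_one_sub_pow_succ, coeff_mk]
  rcases m with _ | m <;> simp [add_comm]

theorem X_mul_X_add_one_mul_inv_one_sub_cube :
    ((Polynomial.X * (Polynomial.X + 1) : Polynomial ℚ) : ℚ⟦X⟧) * ((1 - X) ^ 3)⁻¹ =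
      mk fun m => (m : ℚ) ^ 2 := by
  ext m
  rw [show ((Polynomial.X * (Polynomial.X + 1) : Polynomial ℚ) : ℚ⟦X⟧) = X ^ 2 + X ^ 1 by
    push_cast; ring, add_mul, map_add, coeff_X_pow_mul_inv_one_sub_pow_succ,
    coeff_X_pow_mul_inv_one_sub_pow_succ, coeff_mk]
  rcases m with _ | _ | m
  · simp
  · simp
  · rw [if_pos (by omega), if_pos (by omega), show m + 1 + 1 - 2 = m by omega,
      show m + 1 + 1 - 1 = m + 1 by omega, Nat.cast_choose_two, Nat.cast_choose_two]
    push_cast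
    ring

theorem X_sq_mul_inv_one_sub_pow_four :
    ((Polynomial.X ^ 2 : Polynomial ℚ) : ℚ⟦X⟧) * ((1 - X) ^ 4)⁻¹ =
      mk fun m => ((m : ℚ) ^ 3 - m) / 6 := by
  ext m
  rw [Polynomial.coe_pow, Polynomial.coe_X, coeff_X_pow_mul_inv_one_sub_pow_succ, coeff_mk]
  rcases m with _ | _ | m
  · simp
  · simp
  · rw [if_pos (by omega), show m + 1 + 1 - 2 = m by omega, Nat.cast_choose_eq_ascPochhammer_div,
      show 3 + m - (3 - 1) = m + 1 by omega]
    simp only [ascPochhammer_succ_eval, ascPochhammer_one, Polynomial.eval_X, Nat.factorial]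
    push_cast
    ring

/-- Okounkov's depth-one q-zeta values, with Q₂^O(t)=t, Q₃^O(t)=t(t+1),
Q₄^O(t)=t², satisfy Z(2)=[2], Z(3)=2[3], Z(4)=[4]-(1/6)[2]. -/
theorem stmt18 :
    ZO Polynomial.X 2 = bracket 2 ∧
    ZO (Polynomial.X * (Polynomial.X + 1)) 3 = (2 : ℚ) • bracket 3 ∧
    ZO (Polynomial.X ^ 2) 4 = bracket 4 - (1 / 6 : ℚ) • bracket 2 := by
  rw [ZO_eq_mk_sum_qPairs X_mul_inv_one_sub_sq,
    ZO_eq_mk_sum_qPairs X_mul_X_add_one_mul_inv_one_sub_cube,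
    ZO_eq_mk_sum_qPairs X_sq_mul_inv_one_sub_pow_four]
  refine ⟨?_, ?_, ?_⟩ <;> ext N <;>
    simp only [bracket, coeff_mk, map_sub, coeff_smul, smul_eq_mul]
  · simp
  · norm_num
    ring
  · norm_num [Nat.factorial, Finset.mul_sum, ← Finset.sum_sub_distrib]
    exact Finset.sum_congr rfl fun _ _ => by ring
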